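/- Let F be a free group of rank at least 2. Then NE is not a finite intersection of equational relations: there do not exist finitely many equational relations E₁, …, E_ℓ ⊆ F × F with NE = E₁ ∩ … ∩ E_ℓ. -/

import Mathlib

open FirstOrder

/-- The definable set `NE ⊆ F × F`: pairs `(p, q)` such that `q·p = x₁^10·x₂^{-9}`
for some non-commuting `x₁, x₂`. -/
def NE (F : Type*) [Group F] : Set (F × F) :=
  {pq | ∃ x₁ x₂ : F, pq.2 * pq.1 = x₁ ^ 10 * x₂ ^ (-9 : ℤ) ∧ x₁ * x₂ ≠ x₂ * x₁}

/-- The fiber `D_q = {p | (p, q) ∈ D}` of a relation `D ⊆ F × F`. -/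
def fiber {F : Type*} (D : Set (F × F)) (q : F) : Set F := {p | (p, q) ∈ D}

/-- A relation `D ⊆ F × F` is equational if there is a uniform bound `N` on the length of
sequences `q₁, …, q_m` whose partial intersections `⋂_{i ≤ j} D_{q_i}` are strictly decreasing. -/
def IsEquational {F : Type*} (D : Set (F × F)) : Prop :=
  ∃ N : ℕ, ∀ (m : ℕ) (q : Fin m → F),
    StrictAnti (fun j : Fin m => ⋂ i ∈ Finset.Iic j, fiber D (q i)) → m ≤ N

/-!
Write `c k = b^k a b^{-k}` in the free group on `a ≠ b`. The pairs `((c j)^{-90}, (c i)^{90})`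
form an infinite half-graph for `NE`. For `i < j`, `(c i)^90 (c j)^{-90} = (c i^9)^10 (c j^10)^{-9}`
with non-commuting factors, as one sees in `SL(2, ℤ)`. On the diagonal the product is `1`, and in
a free group `x^10 = y^9` forces `x` and `y` to commute: `x, y` generate a free group
(Nielsen–Schreier), whose abelianization `ℤ^r` is spanned by two dependent vectors, so `r ≤ 1`.
An equational relation has no infinite half-graph, because its first `N + 1` columns would give a
strictly decreasing chain of intersections of fibres. By pigeonhole, neither has a finite
intersection of equational relations.
-/

open Matrix.SpecialLinearGroup ModularGroup
open scoped MatrixGroups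

section HalfGraph
variable {F : Type*}

def HasHalfGraph (D : Set (F × F)) : Prop :=
  ∃ p q : ℕ → F, (∀ i j, i < j → (p j, q i) ∈ D) ∧ ∀ j, (p j, q j) ∉ D

theorem strictAnti_biInter_Iic {ι : Type*} [PartialOrder ι] [LocallyFiniteOrderBot ι]
    {D : ι → Set F} (p : ι → F) (hlt : ∀ i j, i < j → p j ∈ D i) (hnot : ∀ j, p j ∉ D j) :
    StrictAnti fun j => ⋂ i ∈ Finset.Iic j, D i := by
  intro i j hij
  refine (Set.ssubset_iff_of_subset ?_).2 ⟨p j, ?_, ?_⟩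
  · exact Set.biInter_subset_biInter_left fun k hk => Finset.Iic_subset_Iic.2 hij.le hk
  · exact Set.mem_iInter₂.2 fun k hk => hlt k j ((Finset.mem_Iic.1 hk).trans_lt hij)
  · exact fun hmem => hnot j (Set.mem_iInter₂.1 hmem j (Finset.mem_Iic.2 le_rfl))

theorem IsEquational.not_hasHalfGraph {D : Set (F × F)} (hD : IsEquational D) : ¬HasHalfGraph D := by
  rintro ⟨p, q, hlt, hnot⟩
  obtain ⟨N, hN⟩ := hD
  have := hN (N + 1) (fun i => q i) <|
    strictAnti_biInter_Iic (fun j : Fin (N + 1) => p j) (fun i j hij => hlt i j hij) (hnot ·)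
  omega

theorem not_hasHalfGraph_iInter {ι : Type*} [Finite ι] {E : ι → Set (F × F)}
    (hE : ∀ a, IsEquational (E a)) : ¬HasHalfGraph (⋂ a, E a) := by
  rintro ⟨p, q, hlt, hnot⟩
  have hsel (j : ℕ) : ∃ a, (p j, q j) ∉ E a := by simpa using hnot j
  choose sel hsel using hsel
  obtain ⟨a, ha⟩ := Finite.exists_infinite_fiber sel
  have hinf : (Set.ofPred fun j => sel j = a).Infinite := Set.infinite_coe_iff.1 ha
  let e := Nat.nth (sel · = a)
  refine (hE a).not_hasHalfGraph ⟨p ∘ e, q ∘ e,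
    fun i j hij => Set.mem_iInter.1 (hlt _ _ (Nat.nth_strictMono hinf hij)) a, fun j => ?_⟩
  simpa only [Function.comp, e, Nat.nth_mem_of_infinite hinf j] using hsel (e j)

end HalfGraph

theorem Int.closure_pair_ne_top_of_smul_eq_smul {U V : ℤ × ℤ} {m n : ℤ} (hm : m ≠ 0)
    (h : m • U = n • V) : AddSubgroup.closure {U, V} ≠ ⊤ := by
  intro htop
  obtain ⟨a, b, hab⟩ := AddSubgroup.mem_closure_pair.1 (htop ▸ AddSubgroup.mem_top ((1, 0) : ℤ × ℤ))
  obtain ⟨c, d, hcd⟩ := AddSubgroup.mem_closure_pair.1 (htop ▸ AddSubgroup.mem_top ((0, 1) : ℤ × ℤ))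
  simp only [Prod.ext_iff, Prod.smul_fst, Prod.smul_snd, Prod.fst_add, Prod.snd_add, smul_eq_mul]
    at h hab hcd
  have hdet : U.1 * V.2 - U.2 * V.1 = 0 := by
    refine (mul_eq_zero.1 ?_).resolve_left hm
    linear_combination V.2 * h.1 - V.1 * h.2
  have : (a * d - b * c) * (U.1 * V.2 - U.2 * V.1) = 1 := by
    linear_combination (c * U.2 + d * V.2) * hab.1 + hcd.2 - (c * U.1 + d * V.1) * hab.2
  simp [hdet] at this

namespace ModularGroup

theorem coe_conj_zpow (i m : ℤ) :
    (((S * T * S⁻¹) ^ i * T ^ m * ((S * T * S⁻¹) ^ i)⁻¹ : SL(2, ℤ)) : Matrix (Fin 2) (Fin 2) ℤ) =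
      !![1 + m * i, m; -(m * i ^ 2), 1 - m * i] := by
  simp only [conj_zpow, mul_inv_rev, inv_inv, ← zpow_neg, coe_mul, coe_T_zpow, coe_S, coe_inv,
    Matrix.adjugate_fin_two_of, Matrix.mul_fin_two]
  ext a b
  fin_cases a <;> fin_cases b <;>
    simp only [Fin.zero_eta, Fin.mk_one, Matrix.of_apply, Matrix.cons_val', Matrix.cons_val_zero,
      Matrix.cons_val_one, Matrix.cons_val_fin_one] <;> ring

theorem not_commute_conj_zpow {i j m n : ℤ} (hij : i ^ 2 ≠ j ^ 2) (hm : m ≠ 0) (hn : n ≠ 0) :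
    ¬Commute ((S * T * S⁻¹) ^ i * T ^ m * ((S * T * S⁻¹) ^ i)⁻¹ : SL(2, ℤ))
      ((S * T * S⁻¹) ^ j * T ^ n * ((S * T * S⁻¹) ^ j)⁻¹) := by
  have hP := coe_conj_zpow i m
  have hQ := coe_conj_zpow j n
  generalize (S * T * S⁻¹) ^ i * T ^ m * ((S * T * S⁻¹) ^ i)⁻¹ = P at hP ⊢
  generalize (S * T * S⁻¹) ^ j * T ^ n * ((S * T * S⁻¹) ^ j)⁻¹ = Q at hQ ⊢
  intro h
  have h00 := congrArg (fun g : SL(2, ℤ) => (g : Matrix (Fin 2) (Fin 2) ℤ) 0 0) h.eq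
  simp only [coe_mul, hP, hQ, Matrix.mul_apply, Fin.sum_univ_two, Matrix.of_apply,
    Matrix.cons_val', Matrix.cons_val_zero, Matrix.cons_val_one, Matrix.cons_val_fin_one] at h00
  have : m * n * (i ^ 2 - j ^ 2) = 0 := by linear_combination h00
  simp [hm, hn, sub_eq_zero, hij] at this

end ModularGroup

theorem inv_pow_mem_NE {G : Type*} [Group G] {x y : G} (h : ¬Commute (x ^ 9) (y ^ 10)) :
    ((y ^ 90)⁻¹, x ^ 90) ∈ NE G :=
  ⟨x ^ 9, y ^ 10, by simp [← pow_mul, zpow_neg], h⟩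

namespace FreeGroup
variable {α : Type*}

theorem commute_of_subsingleton [Subsingleton α] (u v : FreeGroup α) : Commute u v := by
  have hcomm : ∀ x ∈ Set.range (of : α → FreeGroup α), ∀ y ∈ Set.range of, x * y = y * x := by
    rintro _ ⟨x, rfl⟩ _ ⟨y, rfl⟩
    rw [Subsingleton.elim x y]
  have hmem (w : FreeGroup α) := Subgroup.closure_le_centralizer_centralizer _
    ((closure_range_of α).symm ▸ Subgroup.mem_top w)
  exact Set.centralizer_centralizer_comm_of_comm hcomm u (hmem u) v (hmem v)

theorem subsingleton_of_closure_pair_eq_top {u v : FreeGroup α}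
    (htop : Subgroup.closure {u, v} = ⊤) {m n : ℕ} (hm : m ≠ 0) (h : u ^ m = v ^ n) :
    Subsingleton α := by
  classical
  by_contra hα
  obtain ⟨b₁, b₂, hb⟩ := (not_subsingleton_iff_nontrivial.1 hα).exists_pair_ne
  let Φ : FreeGroup α →* Multiplicative (ℤ × ℤ) := lift fun x =>
    .ofAdd (if x = b₁ then (1, 0) else if x = b₂ then (0, 1) else 0)
  refine Int.closure_pair_ne_top_of_smul_eq_smul (U := (Φ u).toAdd) (V := (Φ v).toAdd)
    (m := m) (n := n) (Int.natCast_ne_zero.2 hm) ?_ ?_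
  · simpa using congrArg (fun g => (Φ g).toAdd) h
  · refine eq_top_iff.2 fun P _ => ?_
    have hw : Φ (of b₁ ^ P.1 * of b₂ ^ P.2) ∈ Subgroup.closure {Φ u, Φ v} := by
      rw [← Set.image_pair, ← MonoidHom.map_closure, htop]
      exact ⟨_, trivial, rfl⟩
    obtain ⟨a, b, hab⟩ := Subgroup.mem_closure_pair.1 hw
    refine AddSubgroup.mem_closure_pair.2 ⟨a, b, ?_⟩
    simpa [Φ, hb.symm] using congrArg Multiplicative.toAdd hab

theorem commute_of_pow_eq_pow {x y : FreeGroup α} {m n : ℕ} (hm : m ≠ 0) (h : x ^ m = y ^ n) :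
    Commute x y := by
  set H := Subgroup.closure {x, y}
  let u : H := ⟨x, Subgroup.subset_closure (by simp)⟩
  let v : H := ⟨y, Subgroup.subset_closure (by simp)⟩
  have htop : Subgroup.closure {u, v} = ⊤ := by
    rw [← Subgroup.closure_closure_coe_preimage (k := {x, y})]
    congr
    ext w
    simp [u, v, Subtype.ext_iff]
  let e := IsFreeGroup.toFreeGroup H
  have htop' : Subgroup.closure {e u, e v} = ⊤ := by
    rw [← Set.image_pair, ← MulEquiv.coe_toMonoidHom, ← MonoidHom.map_closure, htop]
    exact Subgroup.map_top_of_surjective _ e.surjective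
  have huv : u ^ m = v ^ n := Subtype.ext h
  have := subsingleton_of_closure_pair_eq_top htop' hm (by simpa [← map_pow] using congrArg e huv)
  have hcomm : Commute u v := by simpa using (commute_of_subsingleton (e u) (e v)).map e.symm
  exact hcomm.map H.subtype

theorem inv_self_notMem_NE (x : FreeGroup α) : (x⁻¹, x) ∉ NE (FreeGroup α) := by
  rintro ⟨y, z, h, hyz⟩
  refine hyz (commute_of_pow_eq_pow (m := 10) (n := 9) (by norm_num) ?_)
  rw [mul_inv_cancel, eq_comm, zpow_neg, mul_inv_eq_one] at h
  exact_mod_cast h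

theorem not_commute_conj_pow {a b : α} (hab : a ≠ b) {i j : ℕ} (hij : i ≠ j) {m n : ℕ}
    (hm : m ≠ 0) (hn : n ≠ 0) :
    ¬Commute ((of b ^ i * of a * (of b ^ i)⁻¹) ^ m) ((of b ^ j * of a * (of b ^ j)⁻¹) ^ n) := by
  classical
  let ψ : FreeGroup α →* SL(2, ℤ) := lift fun x => if x = a then T else S * T * S⁻¹
  have hψ (k l : ℕ) : ψ ((of b ^ k * of a * (of b ^ k)⁻¹) ^ l) =
      (S * T * S⁻¹) ^ (k : ℤ) * T ^ (l : ℤ) * ((S * T * S⁻¹) ^ (k : ℤ))⁻¹ := by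
    simp [ψ, hab.symm, conj_pow]
  intro h
  have := h.map ψ
  rw [hψ, hψ] at this
  exact not_commute_conj_zpow (by exact_mod_cast (Nat.pow_left_injective two_ne_zero).ne hij)
    (by exact_mod_cast hm) (by exact_mod_cast hn) this

theorem hasHalfGraph_NE [Nontrivial α] : HasHalfGraph (NE (FreeGroup α)) := by
  obtain ⟨a, b, hab⟩ := exists_pair_ne α
  let c (k : ℕ) : FreeGroup α := of b ^ k * of a * (of b ^ k)⁻¹
  exact ⟨fun j => (c j ^ 90)⁻¹, fun i => c i ^ 90,
    fun i j hij => inv_pow_mem_NE (not_commute_conj_pow hab hij.ne (by norm_num) (by norm_num)),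
    fun j => inv_self_notMem_NE _⟩

end FreeGroup

/-- `NE` is not a finite intersection of equational relations. -/
theorem NE_not_finite_inter_equational {α : Type*} [Nontrivial α] :
    ¬ ∃ (ℓ : ℕ) (E : Fin ℓ → Set (FreeGroup α × FreeGroup α)),
      (∀ a, IsEquational (E a)) ∧ NE (FreeGroup α) = ⋂ a, E a := by
  rintro ⟨ℓ, E, hE, hNE⟩
  exact not_hasHalfGraph_iInter hE (hNE ▸ FreeGroup.hasHalfGraph_NE)
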